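/- arXiv:2307.09254 — 3 statements merged into one kernel-verified Lean document; each statement's English description precedes it below -/
import Mathlib

section
/- Let D be a probability measure on a measurable space α, let ℋ be a finite nonempty set of nonnegative real numbers containing 0, and let (E_τ)_{τ ∈ ℋ} be measurable subsets of α such that E_{τ₁} ⊆ E_{τ₂} whenever τ₁ ≤ τ₂ and E_0 = ∅. Fix ε ∈ (0, 1), δ ∈ (0, 1), and n ∈ ℕ. For a sample z ∈ α^n define k_τ(z) := #{i : zᵢ ∈ E_τ}, and define τ̂(z) as the maximum of {τ ∈ ℋ : U_Binom(k_τ(z); n, δ) ≤ ε} if this set is nonempty, and τ̂(z) := 0 otherwise. Then D^n({z ∈ α^n : D(E_{τ̂(z)}) ≤ ε}) ≥ 1 − δ; that is, the learned parameter controls the risk D(E_{τ̂}) at level ε with probability at least 1 − δ over the i.i.d. calibration sample. -/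
/-!
Let `τ'` be the smallest grid point whose risk `θ' = D(E_τ')` exceeds `ε`. If the learned `τ̂`
has risk above `ε`, then `τ' ≤ τ̂`, so `k_τ' ≤ k_τ̂` by nestedness; since `τ̂` passed the test
and `F(k; n, θ)` is monotone in `k` and antitone in `θ`, this forces `F(k_τ'; n, θ') ≤ δ`.
But `k_τ'` is `Bin(n, θ')`-distributed, and a binomial CDF evaluated at its own sample is at
most `δ` with probability at most `δ`. Antitonicity in `θ` comes from the coupling
`F(k; n, θ) = P(#{i : uᵢ ≤ θ} ≤ k)` with `u` uniform on `[0, 1]ⁿ`.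
-/

open MeasureTheory Finset
open scoped ENNReal Classical

/-- The binomial CDF `F(k; n, θ) = ∑_{i=0}^k C(n,i) θ^i (1-θ)^(n-i)`. -/
noncomputable def binomCDF (k n : ℕ) (θ : ℝ) : ℝ :=
  ∑ i ∈ Finset.range (k + 1), (n.choose i : ℝ) * θ ^ i * (1 - θ) ^ (n - i)

/-- The upper binomial tail bound
`U_Binom(k; n, δ) := inf ({θ ∈ [0,1] : F(k; n, θ) ≤ δ} ∪ {1})`. -/
noncomputable def UBinom (k n : ℕ) (δ : ℝ) : ℝ :=
  sInf ({θ : ℝ | θ ∈ Set.Icc (0 : ℝ) 1 ∧ binomCDF k n θ ≤ δ} ∪ {1})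

lemma choose_mul_pow_mul_one_sub_pow_nonneg {θ : ℝ} (hθ : θ ∈ Set.Icc (0 : ℝ) 1) (n i : ℕ) :
    0 ≤ (n.choose i : ℝ) * θ ^ i * (1 - θ) ^ (n - i) := by
  have := hθ.1
  have := sub_nonneg.2 hθ.2
  positivity

lemma binomCDF_nonneg {θ : ℝ} (hθ : θ ∈ Set.Icc (0 : ℝ) 1) (k n : ℕ) : 0 ≤ binomCDF k n θ :=
  sum_nonneg fun i _ => choose_mul_pow_mul_one_sub_pow_nonneg hθ n i

lemma binomCDF_mono {n : ℕ} {θ : ℝ} (hθ : θ ∈ Set.Icc (0 : ℝ) 1) :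
    Monotone fun k => binomCDF k n θ := fun _ _ hk =>
  sum_le_sum_of_subset_of_nonneg (range_subset_range.2 (by omega))
    fun i _ _ => choose_mul_pow_mul_one_sub_pow_nonneg hθ n i

section SampleCount

variable {α : Type*} {n : ℕ}

noncomputable def sampleCount (S : Set α) (z : Fin n → α) : ℕ :=
  (univ.filter fun i => z i ∈ S).card

lemma sampleCount_le (S : Set α) (z : Fin n → α) : sampleCount S z ≤ n :=
  (card_filter_le _ _).trans_eq (card_fin n)

lemma sampleCount_mono {S T : Set α} (hST : S ⊆ T) (z : Fin n → α) :
    sampleCount S z ≤ sampleCount T z :=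
  card_le_card (monotone_filter_right _ fun _ _ h => hST h)

lemma preimage_filter_mem_eq_pi (S : Set α) (A : Finset (Fin n)) :
    (fun z : Fin n → α => univ.filter fun i => z i ∈ S) ⁻¹' {A}
      = Set.univ.pi fun i => if i ∈ A then S else Sᶜ := by
  ext z
  simp only [Set.mem_preimage, Set.mem_singleton_iff, Finset.ext_iff, mem_filter, mem_univ,
    true_and, Set.mem_pi, Set.mem_univ, forall_const]
  refine forall_congr' fun i => ?_
  by_cases hi : i ∈ A <;> simp [hi]

variable [MeasurableSpace α]

lemma measurable_sampleCount {S : Set α} (hS : MeasurableSet S) :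
    Measurable (sampleCount S : (Fin n → α) → ℕ) := by
  have : sampleCount S = fun z : Fin n → α => ∑ i, if z i ∈ S then 1 else 0 :=
    funext fun z => card_filter _ _
  rw [this]
  exact Finset.measurable_sum _ fun i _ =>
    Measurable.ite (hS.preimage (measurable_pi_apply i)) measurable_const measurable_const

variable (D : Measure α) [IsProbabilityMeasure D]

lemma measure_sampleCount_eq {S : Set α} (hS : MeasurableSet S) (j : ℕ) :
    Measure.pi (fun _ : Fin n => D) (sampleCount S ⁻¹' {j})
      = n.choose j * D S ^ j * D Sᶜ ^ (n - j) := by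
  have hfib : (sampleCount S : (Fin n → α) → ℕ) ⁻¹' {j}
      = ⋃ A ∈ powersetCard j univ, (fun z => univ.filter fun i => z i ∈ S) ⁻¹' {A} := by
    ext z
    simp [sampleCount]
  have hpattern : ∀ A ∈ powersetCard j (univ : Finset (Fin n)),
      Measure.pi (fun _ => D) ((fun z => univ.filter fun i => z i ∈ S) ⁻¹' {A})
        = D S ^ j * D Sᶜ ^ (n - j) := by
    intro A hA
    rw [mem_powersetCard] at hA
    rw [preimage_filter_mem_eq_pi, Measure.pi_pi, ← prod_mul_prod_compl A,
      prod_congr rfl fun i hi => congrArg D (if_pos hi),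
      prod_congr rfl fun i hi => congrArg D (if_neg (mem_compl.1 hi)),
      prod_const, prod_const, card_compl, Fintype.card_fin, hA.2]
  rw [hfib, measure_biUnion_finset (Set.pairwiseDisjoint_fiber _ _), sum_congr rfl hpattern,
    sum_const, card_powersetCard, card_univ, Fintype.card_fin, nsmul_eq_mul, mul_assoc]
  intro A _
  rw [preimage_filter_mem_eq_pi]
  exact MeasurableSet.univ_pi fun i => by split_ifs; exacts [hS, hS.compl]

lemma measure_sampleCount_le {S : Set α} (hS : MeasurableSet S) (k : ℕ) :
    Measure.pi (fun _ : Fin n => D) {z | sampleCount S z ≤ k}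
      = ENNReal.ofReal (binomCDF k n (D S).toReal) := by
  set θ := (D S).toReal
  have hθ : θ ∈ Set.Icc (0 : ℝ) 1 := ⟨ENNReal.toReal_nonneg, measureReal_le_one⟩
  have hcompl : D Sᶜ = ENNReal.ofReal (1 - θ) := by
    rw [prob_compl_eq_one_sub hS, ENNReal.ofReal_sub _ hθ.1, ENNReal.ofReal_one,
      ENNReal.ofReal_toReal (measure_ne_top D S)]
  have hfib : {z : Fin n → α | sampleCount S z ≤ k}
      = ⋃ j ∈ range (k + 1), sampleCount S ⁻¹' {j} := by
    ext z
    simp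
  rw [hfib, measure_biUnion_finset (Set.pairwiseDisjoint_fiber _ _)
    (fun j _ => measurable_sampleCount hS (measurableSet_singleton j)), binomCDF,
    ENNReal.ofReal_sum_of_nonneg fun i _ => choose_mul_pow_mul_one_sub_pow_nonneg hθ n i]
  refine sum_congr rfl fun j _ => ?_
  rw [measure_sampleCount_eq D hS, hcompl, ENNReal.ofReal_mul (by positivity [hθ.1]),
    ENNReal.ofReal_mul (by positivity [hθ.1]), ENNReal.ofReal_natCast, ENNReal.ofReal_pow hθ.1,
    ENNReal.ofReal_pow (sub_nonneg.2 hθ.2), ENNReal.ofReal_toReal (measure_ne_top D S)]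

lemma measure_binomCDF_sampleCount_le {S : Set α} (hS : MeasurableSet S) (δ : ℝ) :
    Measure.pi (fun _ : Fin n => D) {z | binomCDF (sampleCount S z) n (D S).toReal ≤ δ}
      ≤ ENNReal.ofReal δ := by
  rcases Set.eq_empty_or_nonempty
    {z : Fin n → α | binomCDF (sampleCount S z) n (D S).toReal ≤ δ} with hempty | ⟨z₀, hz₀⟩
  · simp [hempty]
  set m := Nat.findGreatest (fun m => binomCDF m n (D S).toReal ≤ δ) n
  calc Measure.pi (fun _ => D) {z | binomCDF (sampleCount S z) n (D S).toReal ≤ δ}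
      ≤ Measure.pi (fun _ => D) {z | sampleCount S z ≤ m} :=
        measure_mono fun z hz => Nat.le_findGreatest (sampleCount_le S z) hz
    _ = ENNReal.ofReal (binomCDF m n (D S).toReal) := measure_sampleCount_le D hS m
    _ ≤ ENNReal.ofReal δ :=
        ENNReal.ofReal_le_ofReal
          (Nat.findGreatest_spec (P := fun m => binomCDF m n (D S).toReal ≤ δ)
            (sampleCount_le S z₀) hz₀)

end SampleCount

lemma binomCDF_antitoneOn (k n : ℕ) : AntitoneOn (binomCDF k n) (Set.Icc 0 1) := by
  intro θ₁ hθ₁ θ₂ hθ₂ h12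
  have hcdf : ∀ (θ : ℝ) (hθ : θ ∈ Set.Icc (0 : ℝ) 1), ENNReal.ofReal (binomCDF k n θ)
      = Measure.pi (fun _ : Fin n => (volume : Measure unitInterval))
          {u | sampleCount (Set.Iic ⟨θ, hθ⟩) u ≤ k} := fun θ hθ => by
    rw [measure_sampleCount_le _ measurableSet_Iic, unitInterval.volume_Iic,
      ENNReal.toReal_ofReal hθ.1]
  rw [← ENNReal.ofReal_le_ofReal_iff (binomCDF_nonneg hθ₁ k n), hcdf θ₁ hθ₁, hcdf θ₂ hθ₂]
  exact measure_mono fun u (hu : _ ≤ k) => show _ ≤ k by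
    have hle : (⟨θ₁, hθ₁⟩ : unitInterval) ≤ ⟨θ₂, hθ₂⟩ := h12
    exact (sampleCount_mono (Set.Iic_subset_Iic.2 hle) u).trans hu

lemma binomCDF_le_of_UBinom_lt {k n : ℕ} {δ θ : ℝ} (h : UBinom k n δ < θ) (hθ : θ ≤ 1) :
    binomCDF k n θ ≤ δ := by
  rw [UBinom] at h
  obtain ⟨θ₀, hθ₀, hlt⟩ :=
    exists_lt_of_csInf_lt (Set.union_nonempty.2 (Or.inr (Set.singleton_nonempty 1))) h
  rcases hθ₀ with ⟨hθ₀I, hF⟩ | rfl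
  · exact (binomCDF_antitoneOn k n hθ₀I ⟨hθ₀I.1.trans hlt.le, hθ⟩ hlt.le).trans hF
  · exact absurd hθ hlt.not_ge

lemma binomCDF_sampleCount_le_of_UBinom_le {α : Type*} [MeasurableSpace α] (D : Measure α)
    [IsProbabilityMeasure D] {n : ℕ} {S T : Set α} (hST : S ⊆ T) {z : Fin n → α} {δ ε : ℝ}
    (hU : UBinom (sampleCount T z) n δ ≤ ε) (hε : ENNReal.ofReal ε < D S) :
    binomCDF (sampleCount S z) n (D S).toReal ≤ δ := by
  have hθ : (D S).toReal ∈ Set.Icc (0 : ℝ) 1 := ⟨ENNReal.toReal_nonneg, measureReal_le_one⟩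
  have hεθ : ε < (D S).toReal := lt_of_not_ge fun h =>
    hε.not_ge ((ENNReal.ofReal_toReal (measure_ne_top D S)).symm.trans_le
      (ENNReal.ofReal_le_ofReal h))
  exact (binomCDF_mono hθ (sampleCount_mono hST z)).trans
    (binomCDF_le_of_UBinom_lt (hU.trans_lt hεθ) hθ.2)

lemma mem_filter_or_eq_of_eq_dite_max' {β : Type*} [LinearOrder β] {H : Finset β}
    {p : β → Prop} [DecidablePred p] {a t : β}
    (ht : t = if h : (H.filter p).Nonempty then (H.filter p).max' h else a) :
    t ∈ H.filter p ∨ t = a := by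
  split_ifs at ht with h
  · exact Or.inl (ht ▸ max'_mem _ h)
  · exact Or.inr ht

theorem pac_conformal_binomial_general {α : Type*} [MeasurableSpace α]
    (D : Measure α) [IsProbabilityMeasure D]
    (H : Finset ℝ)
    (E : ℝ → Set α) (hEmeas : ∀ τ ∈ H, MeasurableSet (E τ))
    (hEmono : ∀ τ₁ ∈ H, ∀ τ₂ ∈ H, τ₁ ≤ τ₂ → E τ₁ ⊆ E τ₂)
    (hE0 : E 0 = ∅)
    (ε δ : ℝ) (n : ℕ)
    (kcount : (Fin n → α) → ℝ → ℕ)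
    (hkcount : ∀ z τ, kcount z τ = (Finset.univ.filter fun i : Fin n => z i ∈ E τ).card)
    (tauhat : (Fin n → α) → ℝ)
    (htauhat : ∀ z,
      tauhat z =
        if h : (H.filter fun τ => UBinom (kcount z τ) n δ ≤ ε).Nonempty
        then (H.filter fun τ => UBinom (kcount z τ) n δ ≤ ε).max' h
        else 0) :
    (Measure.pi fun _ : Fin n => D)
        {z : Fin n → α | D (E (tauhat z)) ≤ ENNReal.ofReal ε}
      ≥ 1 - ENNReal.ofReal δ := by
  set μ := Measure.pi fun _ : Fin n => D
  set Hbad := H.filter fun τ => ENNReal.ofReal ε < D (E τ)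
  have hselect : ∀ z, ENNReal.ofReal ε < D (E (tauhat z)) →
      tauhat z ∈ Hbad ∧ UBinom (kcount z (tauhat z)) n δ ≤ ε := fun z hz => by
    rcases mem_filter_or_eq_of_eq_dite_max' (htauhat z) with hmem | hzero
    · exact ⟨mem_filter.2 ⟨(mem_filter.1 hmem).1, hz⟩, (mem_filter.1 hmem).2⟩
    · simp [hzero, hE0] at hz
  suffices hbad : μ {z | D (E (tauhat z)) ≤ ENNReal.ofReal ε}ᶜ ≤ ENNReal.ofReal δ by
    rw [ge_iff_le, tsub_le_iff_right, ← measure_univ (μ := μ)]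
    exact (measure_univ_le_add_compl _).trans (add_le_add le_rfl hbad)
  rcases Hbad.eq_empty_or_nonempty with hempty | hne
  · calc μ _ ≤ μ ∅ := measure_mono fun z hz => by
          simpa [hempty] using (hselect z (not_le.1 hz)).1
      _ ≤ _ := by simp
  set τ' := Hbad.min' hne
  obtain ⟨hτ'H, hτ'risk⟩ := mem_filter.1 (Hbad.min'_mem hne)
  calc μ _ ≤ μ {z | binomCDF (sampleCount (E τ') z) n (D (E τ')).toReal ≤ δ} :=
        measure_mono fun z hz => by
          obtain ⟨hbad, hU⟩ := hselect z (not_le.1 hz)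
          exact binomCDF_sampleCount_le_of_UBinom_le D
            (hEmono _ hτ'H _ (mem_filter.1 hbad).1 (Hbad.min'_le _ hbad))
            (by rwa [hkcount] at hU) hτ'risk
    _ ≤ ENNReal.ofReal δ := measure_binomCDF_sampleCount_le D (hEmeas _ hτ'H) δ

/-- Theorem 1 of the paper (PAC guarantee of the binomial-tail conformal set learning
algorithm `𝒜_Binom`): for nested failure events `E_τ` indexed by a finite grid `ℋ`
containing `0` with `E_0 = ∅`, the parameter `τ̂` chosen as the largest grid point whose
empirical failure count passes the binomial tail test controls the true risk
`D(E_{τ̂})` at level `ε` with probability at least `1 − δ` over the i.i.d. sample. -/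
theorem pac_conformal_binomial {α : Type*} [MeasurableSpace α]
    (D : Measure α) [IsProbabilityMeasure D]
    (H : Finset ℝ) (hHne : H.Nonempty) (hH0 : (0 : ℝ) ∈ H) (hHnonneg : ∀ τ ∈ H, 0 ≤ τ)
    (E : ℝ → Set α) (hEmeas : ∀ τ ∈ H, MeasurableSet (E τ))
    (hEmono : ∀ τ₁ ∈ H, ∀ τ₂ ∈ H, τ₁ ≤ τ₂ → E τ₁ ⊆ E τ₂)
    (hE0 : E 0 = ∅)
    (ε δ : ℝ) (hε : ε ∈ Set.Ioo (0 : ℝ) 1) (hδ : δ ∈ Set.Ioo (0 : ℝ) 1) (n : ℕ)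
    (kcount : (Fin n → α) → ℝ → ℕ)
    (hkcount : ∀ z τ, kcount z τ = (Finset.univ.filter fun i : Fin n => z i ∈ E τ).card)
    (tauhat : (Fin n → α) → ℝ)
    (htauhat : ∀ z,
      tauhat z =
        if h : (H.filter fun τ => UBinom (kcount z τ) n δ ≤ ε).Nonempty
        then (H.filter fun τ => UBinom (kcount z τ) n δ ≤ ε).max' h
        else 0) :
    (Measure.pi fun _ : Fin n => D)
        {z : Fin n → α | D (E (tauhat z)) ≤ ENNReal.ofReal ε}
      ≥ 1 - ENNReal.ofReal δ :=
  pac_conformal_binomial_general D H E hEmeas hEmono hE0 ε δ n kcount hkcount tauhat htauhat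
end

section
/- Let (Ω, 𝒜, P) be a probability space, let T : Ω → ℝ be a measurable random variable with 0 ≤ T ≤ 1 almost surely, and let A ∈ 𝒜 be an event such that the conditional expectation of the indicator of A given the σ-algebra generated by T equals T almost surely (perfect calibration: P(A | T = t) = t for all t). Then for all 0 ≤ τ₁ ≤ τ₂ with P(T ≥ τ₂) > 0, the conditional false discovery rate is monotonically nonincreasing in the threshold: P(Aᶜ ∩ {T ≥ τ₂}) / P(T ≥ τ₂) ≤ P(Aᶜ ∩ {T ≥ τ₁}) / P(T ≥ τ₁). -/
open MeasureTheory

/-!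
Calibration says that on every event `S` determined by `T` the mass of `A` is `∫_S T`, so
`P(Aᶜ ∩ S) = ∫_S (1 - T)` and the FDR at threshold `τ` is the average of `1 - T` over
`{T ≥ τ}`. Raising the threshold from `τ₁` to `τ₂` removes the points where `1 - T > 1 - τ₂`
and keeps only points where `1 - T ≤ 1 - τ₂`, so the average cannot increase.
-/

section Average

variable {α : Type*} [MeasurableSpace α] {μ : Measure α} [IsFiniteMeasure μ]
  {s t : Set α} {f : α → ℝ}

theorem setAverage_le_setAverage_of_le_of_le_sdiff (c : ℝ) (hst : s ⊆ t)
    (hs : MeasurableSet s) (ht : MeasurableSet t) (hf : IntegrableOn f t μ) (hs0 : μ s ≠ 0)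
    (hle : ∀ᵐ x ∂μ.restrict s, f x ≤ c) (hge : ∀ᵐ x ∂μ.restrict (t \ s), c ≤ f x) :
    ⨍ x in s, f x ∂μ ≤ ⨍ x in t, f x ∂μ := by
  have hts : MeasurableSet (t \ s) := ht.diff hs
  have hs_pos : 0 < μ.real s := ENNReal.toReal_pos hs0 (measure_ne_top μ s)
  have hint_s : ∫ x in s, f x ∂μ ≤ c * μ.real s := by
    simpa [setIntegral_const, mul_comm] using
      setIntegral_mono_ae_restrict (hf.mono_set hst) (integrableOn_const (C := c)) hle
  have hint_ts : c * μ.real (t \ s) ≤ ∫ x in t \ s, f x ∂μ := by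
    simpa [setIntegral_const, mul_comm] using
      setIntegral_mono_ae_restrict (integrableOn_const (C := c)) (hf.mono_set Set.sdiff_subset) hge
  have hsplit : t = s ∪ t \ s := (Set.union_sdiff_cancel hst).symm
  have hmeasure : μ.real t = μ.real s + μ.real (t \ s) := by
    rw [hsplit, measureReal_union Set.disjoint_sdiff_right hts, ← hsplit]
  have hintegral : ∫ x in t, f x ∂μ = ∫ x in s, f x ∂μ + ∫ x in t \ s, f x ∂μ := by
    rw [hsplit, setIntegral_union Set.disjoint_sdiff_right hts (hf.mono_set hst)
      (hf.mono_set Set.sdiff_subset), ← hsplit]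
  have hts_nonneg : 0 ≤ μ.real (t \ s) := measureReal_nonneg
  simp only [setAverage_eq, smul_eq_mul, inv_mul_eq_div]
  rw [hmeasure, hintegral, div_le_div_iff₀ hs_pos (by positivity)]
  linarith [mul_le_mul_of_nonneg_right hint_s hts_nonneg,
    mul_le_mul_of_nonneg_right hint_ts hs_pos.le]

end Average

section Calibration

variable {Ω : Type*} {m m₀ : MeasurableSpace Ω} {P : Measure[m₀] Ω} [IsFiniteMeasure P]
  {A S : Set Ω} {T : Ω → ℝ}

theorem setIntegral_eq_measureReal_inter_of_condExp_indicator_eq (hm : m ≤ m₀)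
    (hA : MeasurableSet[m₀] A) (hcal : P[A.indicator (fun _ => (1 : ℝ)) | m] =ᵐ[P] T)
    (hS : MeasurableSet[m] S) :
    ∫ ω in S, T ω ∂P = P.real (A ∩ S) :=
  calc ∫ ω in S, T ω ∂P = ∫ ω in S, (P[A.indicator (fun _ => (1 : ℝ)) | m]) ω ∂P :=
        setIntegral_congr_ae (hm S hS) (hcal.mono fun _ h _ => h.symm)
    _ = ∫ ω in S, A.indicator (fun _ => (1 : ℝ)) ω ∂P :=
        setIntegral_condExp hm ((integrable_const 1).indicator hA) hS
    _ = P.real (A ∩ S) := by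
        rw [integral_indicator_const _ hA, measureReal_restrict_apply hA, smul_eq_mul, mul_one]

theorem measureReal_compl_inter_eq_setIntegral_one_sub (hm : m ≤ m₀)
    (hA : MeasurableSet[m₀] A) (hcal : P[A.indicator (fun _ => (1 : ℝ)) | m] =ᵐ[P] T)
    (hS : MeasurableSet[m] S) :
    P.real (Aᶜ ∩ S) = ∫ ω in S, (1 - T ω) ∂P := by
  have hT : Integrable T P := integrable_condExp.congr hcal
  have hsplit : P.real (S ∩ A) + P.real (S \ A) = P.real S := measureReal_inter_add_sdiff hA
  rw [integral_sub (integrableOn_const (C := (1 : ℝ))) hT.integrableOn, setIntegral_const,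
    setIntegral_eq_measureReal_inter_of_condExp_indicator_eq hm hA hcal hS,
    ← Set.sdiff_eq_compl_inter, Set.inter_comm, smul_eq_mul, mul_one]
  linarith

end Calibration

theorem calibrated_fdr_antitone_general {Ω : Type*} [MeasurableSpace Ω]
    (P : Measure Ω) [IsProbabilityMeasure P]
    (T : Ω → ℝ) (hT : Measurable T)
    (A : Set Ω) (hA : MeasurableSet A)
    (hcal :
      P[A.indicator (fun _ => (1 : ℝ)) |
        MeasurableSpace.comap T (inferInstance : MeasurableSpace ℝ)] =ᵐ[P] T)
    (τ₁ τ₂ : ℝ) (h12 : τ₁ ≤ τ₂)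
    (hpos : P {ω | τ₂ ≤ T ω} ≠ 0) :
    (P (Aᶜ ∩ {ω | τ₂ ≤ T ω})).toReal / (P {ω | τ₂ ≤ T ω}).toReal
      ≤ (P (Aᶜ ∩ {ω | τ₁ ≤ T ω})).toReal / (P {ω | τ₁ ≤ T ω}).toReal := by
  have hm := hT.comap_le
  have hlevel (τ : ℝ) : MeasurableSet[MeasurableSpace.comap T inferInstance] {ω | τ ≤ T ω} :=
    ⟨Set.Ici τ, measurableSet_Ici, rfl⟩
  have hfdr (τ : ℝ) : (P (Aᶜ ∩ {ω | τ ≤ T ω})).toReal / (P {ω | τ ≤ T ω}).toReal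
      = ⨍ ω in {ω | τ ≤ T ω}, (1 - T ω) ∂P := by
    rw [← measureReal_def, ← measureReal_def, setAverage_eq, smul_eq_mul, inv_mul_eq_div,
      measureReal_compl_inter_eq_setIntegral_one_sub hm hA hcal (hlevel τ)]
  rw [hfdr, hfdr]
  refine setAverage_le_setAverage_of_le_of_le_sdiff (1 - τ₂) (fun ω hω => h12.trans hω)
    (hm _ (hlevel τ₂)) (hm _ (hlevel τ₁))
    ((integrable_const 1).sub (integrable_condExp.congr hcal)).integrableOn hpos ?_ ?_
  · exact ae_restrict_of_forall_mem (hm _ (hlevel τ₂)) fun ω (hω : τ₂ ≤ T ω) => by linarith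
  · exact ae_restrict_of_forall_mem ((hm _ (hlevel τ₁)).diff (hm _ (hlevel τ₂)))
      fun ω hω => by linarith [(not_le.mp hω.2 : T ω < τ₂)]

/-- Lemma 4 of the paper in measure-theoretic form: if the confidence score `T` is
perfectly calibrated for the event `A` (i.e. the conditional expectation of the
indicator of `A` given the σ-algebra generated by `T` is `T` itself), then the
conditional false discovery rate `P(Aᶜ | T ≥ τ)` is monotonically nonincreasing in
the threshold `τ`. -/
theorem calibrated_fdr_antitone {Ω : Type*} [MeasurableSpace Ω]
    (P : Measure Ω) [IsProbabilityMeasure P]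
    (T : Ω → ℝ) (hT : Measurable T)
    (hT01 : ∀ᵐ ω ∂P, T ω ∈ Set.Icc (0 : ℝ) 1)
    (A : Set Ω) (hA : MeasurableSet A)
    (hcal :
      P[A.indicator (fun _ => (1 : ℝ)) |
        MeasurableSpace.comap T (inferInstance : MeasurableSpace ℝ)] =ᵐ[P] T)
    (τ₁ τ₂ : ℝ) (h0 : 0 ≤ τ₁) (h12 : τ₁ ≤ τ₂)
    (hpos : P {ω | τ₂ ≤ T ω} ≠ 0) :
    (P (Aᶜ ∩ {ω | τ₂ ≤ T ω})).toReal / (P {ω | τ₂ ≤ T ω}).toReal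
      ≤ (P (Aᶜ ∩ {ω | τ₁ ≤ T ω})).toReal / (P {ω | τ₁ ≤ T ω}).toReal :=
  calibrated_fdr_antitone_general P T hT A hA hcal τ₁ τ₂ h12 hpos
end

section
/- Let (Ω, 𝒜, P) be a probability space and let T : Ω → ℝ be a nonnegative integrable random variable. Then for all 0 ≤ τ₁ ≤ τ₂ with P(T ≥ τ₂) > 0, (∫ T·1_{T ≥ τ₁} dP) / P(T ≥ τ₁) ≤ (∫ T·1_{T ≥ τ₂} dP) / P(T ≥ τ₂); that is, the conditional mean of T given T ≥ τ is monotonically nondecreasing in the threshold τ. -/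
open MeasureTheory Set
open scoped ENNReal

/-!
Split `{τ₁ ≤ T}` into `{τ₂ ≤ T}`, where `T ≥ τ₂`, and the band `{τ₁ ≤ T < τ₂}`, where
`T < τ₂`. The mean over the union is a weighted average of the means over the two pieces, and
the mean over the band is at most `τ₂`, which is at most the mean over `{τ₂ ≤ T}`.
-/

theorem add_div_add_le_div {a b c p q : ℝ} (hp : 0 < p) (hq : 0 ≤ q)
    (hb : c * p ≤ b) (ha : a ≤ c * q) : (b + a) / (p + q) ≤ b / p := by
  rw [div_le_div_iff₀ (by positivity) hp]
  nlinarith [mul_le_mul_of_nonneg_left ha hp.le, mul_le_mul_of_nonneg_left hb hq]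

theorem setAverage_le_setAverage_of_subset {α : Type*} [MeasurableSpace α]
    {μ : Measure α} {s t : Set α} {f : α → ℝ} (c : ℝ) (hts : t ⊆ s)
    (hs : NullMeasurableSet s μ) (ht : NullMeasurableSet t μ) (hμs : μ s ≠ ∞) (hμt : μ t ≠ 0)
    (hf : IntegrableOn f s μ)
    (hle : ∀ x ∈ s \ t, f x ≤ c) (hge : ∀ x ∈ t, c ≤ f x) :
    ⨍ x in s, f x ∂μ ≤ ⨍ x in t, f x ∂μ := by
  have hμt_fin : μ t ≠ ∞ := ne_top_of_le_ne_top hμs (measure_mono hts)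
  have hμst_fin : μ (s \ t) ≠ ∞ := ne_top_of_le_ne_top hμs (measure_mono sdiff_subset)
  have hmeasure : μ.real s = μ.real t + μ.real (s \ t) := by
    conv_lhs => rw [← union_sdiff_cancel hts]
    exact measureReal_union₀' ht disjoint_sdiff_right.aedisjoint hμt_fin hμst_fin
  have hintegral : ∫ x in s, f x ∂μ = (∫ x in t, f x ∂μ) + ∫ x in s \ t, f x ∂μ := by
    rw [setIntegral_sdiff₀ ht hf hts]
    ring
  have hlower : c * μ.real t ≤ ∫ x in t, f x ∂μ := by
    simpa [setIntegral_const, mul_comm] using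
      setIntegral_mono_on₀ (integrableOn_const hμt_fin) (hf.mono_set hts) ht hge
  have hupper : ∫ x in s \ t, f x ∂μ ≤ c * μ.real (s \ t) := by
    simpa [setIntegral_const, mul_comm] using
      setIntegral_mono_on₀ (hf.mono_set sdiff_subset) (integrableOn_const hμst_fin)
        (hs.diff ht) hle
  simp only [setAverage_eq, smul_eq_mul, inv_mul_eq_div]
  rw [hmeasure, hintegral]
  exact add_div_add_le_div (ENNReal.toReal_pos hμt hμt_fin) measureReal_nonneg hlower hupper

theorem conditional_mean_monotone_general {Ω : Type*} [MeasurableSpace Ω]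
    (P : Measure Ω) [IsProbabilityMeasure P]
    (T : Ω → ℝ) (hTint : Integrable T P)
    (τ₁ τ₂ : ℝ) (h12 : τ₁ ≤ τ₂)
    (hpos : P {ω | τ₂ ≤ T ω} ≠ 0) :
    (∫ ω in {ω | τ₁ ≤ T ω}, T ω ∂P) / (P {ω | τ₁ ≤ T ω}).toReal
      ≤ (∫ ω in {ω | τ₂ ≤ T ω}, T ω ∂P) / (P {ω | τ₂ ≤ T ω}).toReal := by
  have hmeas (τ : ℝ) : NullMeasurableSet {ω | τ ≤ T ω} P :=
    nullMeasurableSet_le aemeasurable_const hTint.aemeasurable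
  have hmono : ⨍ ω in {ω | τ₁ ≤ T ω}, T ω ∂P ≤ ⨍ ω in {ω | τ₂ ≤ T ω}, T ω ∂P :=
    setAverage_le_setAverage_of_subset τ₂ (fun ω hω ↦ h12.trans hω) (hmeas τ₁) (hmeas τ₂)
      (measure_ne_top P _) hpos hTint.integrableOn (fun ω hω ↦ (not_le.mp hω.2).le)
      (fun ω hω ↦ hω)
  simpa only [setAverage_eq, smul_eq_mul, inv_mul_eq_div, measureReal_def] using hmono

/-- The conditional mean of a nonnegative integrable random variable `T` given
`T ≥ τ` is monotonically nondecreasing in the threshold `τ`. -/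
theorem conditional_mean_monotone {Ω : Type*} [MeasurableSpace Ω]
    (P : Measure Ω) [IsProbabilityMeasure P]
    (T : Ω → ℝ) (hTnonneg : ∀ ω, 0 ≤ T ω) (hTint : Integrable T P)
    (τ₁ τ₂ : ℝ) (h0 : 0 ≤ τ₁) (h12 : τ₁ ≤ τ₂)
    (hpos : P {ω | τ₂ ≤ T ω} ≠ 0) :
    (∫ ω in {ω | τ₁ ≤ T ω}, T ω ∂P) / (P {ω | τ₁ ≤ T ω}).toReal
      ≤ (∫ ω in {ω | τ₂ ≤ T ω}, T ω ∂P) / (P {ω | τ₂ ≤ T ω}).toReal :=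
  conditional_mean_monotone_general P T hTint τ₁ τ₂ h12 hpos
end
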